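/- Let k > 0, let x₁ < 1, and let c : [x₁, 1] → ℝ be continuous. Let u : [x₁,1] → ℂ be twice continuously differentiable with u''(x) + k² c(x) u(x) = 0 on (x₁, 1), u(x₁) = 0, and u'(1) = −ik u(1). Then u(1) = 0. -/

import Mathlib

/-!
Along a solution of `u'' + q u = 0` with real `q`, the flux `Im (u' ū)` is constant: its
derivative `Im (u'' ū) + Im |u'|² = Im (-q |u|²)` vanishes. The flux is `0` at `x₁`, where `u`
vanishes, while the impedance condition `u'(1) = -ik u(1)` makes it `-k |u(1)|²` at `1`.
-/

open Set ComplexConjugate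

theorem eq_of_hasDerivAt_zero_of_mem_Ioo {f : ℝ → ℝ} {a b : ℝ} (hab : a ≤ b)
    (hf : ContinuousOn f (Icc a b)) (hf' : ∀ x ∈ Ioo a b, HasDerivAt f 0 x) : f b = f a := by
  rcases hab.eq_or_lt with rfl | hab
  · rfl
  obtain ⟨_, _, hslope⟩ := exists_hasDerivAt_eq_slope f (fun _ ↦ 0) hab hf hf'
  rw [eq_div_iff (sub_ne_zero.2 hab.ne')] at hslope
  linarith

noncomputable def flux (u : ℝ → ℂ) (x : ℝ) : ℝ := (deriv u x * conj (u x)).im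

theorem hasDerivAt_flux {u : ℝ → ℂ} {x : ℝ} (hu : DifferentiableAt ℝ u x)
    (hu' : DifferentiableAt ℝ (deriv u) x) :
    HasDerivAt (flux u) ((deriv (deriv u) x * conj (u x)).im) x := by
  have hprod : HasDerivAt (fun y ↦ deriv u y * conj (u y))
      (deriv (deriv u) x * conj (u x) + deriv u x * conj (deriv u x)) x :=
    hu'.hasDerivAt.mul hu.hasDerivAt.star
  have him_sq : (deriv u x * conj (deriv u x)).im = 0 := by
    rw [Complex.mul_conj, Complex.ofReal_im]
  have himprod := Complex.imCLM.hasFDerivAt.comp_hasDerivAt x hprod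
  rwa [Complex.imCLM_apply, Complex.add_im, him_sq, add_zero] at himprod

theorem flux_eq_of_deriv_deriv_add_mul_eq_zero {u : ℝ → ℂ} (hu : ContDiff ℝ 2 u) {q : ℝ → ℝ}
    {a b : ℝ} (hab : a ≤ b) (hode : ∀ x ∈ Ioo a b, deriv (deriv u) x + q x * u x = 0) :
    flux u b = flux u a := by
  have hdu : ContDiff ℝ 1 (deriv u) := (contDiff_succ_iff_deriv (n := 1)).mp hu |>.2.2
  have hu_diff : Differentiable ℝ u := hu.differentiable two_ne_zero
  have hdu_diff : Differentiable ℝ (deriv u) := hdu.differentiable one_ne_zero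
  refine eq_of_hasDerivAt_zero_of_mem_Ioo hab (fun x _ ↦ ?_) fun x hx ↦ ?_
  · exact (hasDerivAt_flux (hu_diff x) (hdu_diff x)).continuousAt.continuousWithinAt
  · have hu'' : deriv (deriv u) x = -(q x * u x) := eq_neg_of_add_eq_zero_left (hode x hx)
    convert hasDerivAt_flux (hu_diff x) (hdu_diff x) using 1
    rw [hu'', neg_mul, mul_assoc, Complex.mul_conj, Complex.neg_im, ← Complex.ofReal_mul,
      Complex.ofReal_im, neg_zero]

theorem helmholtz_boundary_vanishing
    (k : ℝ) (hk : 0 < k) (x₁ : ℝ) (hx₁ : x₁ < 1)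
    (c : ℝ → ℝ)
    (u : ℝ → ℂ) (hu : ContDiff ℝ 2 u)
    (hode : ∀ x ∈ Set.Ioo x₁ (1:ℝ),
      deriv (deriv u) x + (k : ℂ) ^ 2 * (c x : ℂ) * u x = 0)
    (hzero : u x₁ = 0)
    (hbc : deriv u 1 = -Complex.I * (k : ℂ) * u 1) :
    u 1 = 0 := by
  have hconst : flux u 1 = flux u x₁ :=
    flux_eq_of_deriv_deriv_add_mul_eq_zero hu (q := fun x ↦ k ^ 2 * c x) hx₁.le
      fun x hx ↦ by push_cast; exact hode x hx
  have hflux_x₁ : flux u x₁ = 0 := by simp [flux, hzero]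
  have hflux_one : flux u 1 = -(k * Complex.normSq (u 1)) := by
    rw [flux, hbc, mul_assoc, Complex.mul_conj]
    simp
  have hnormSq : Complex.normSq (u 1) = 0 := by
    rw [hflux_one, hflux_x₁, neg_eq_zero] at hconst
    exact (mul_eq_zero.mp hconst).resolve_left hk.ne'
  exact Complex.normSq_eq_zero.mp hnormSq
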